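/- Let (Omega, C, Gamma) be a naive convex co-compact triple and let X be a Gamma-invariant, strongly isolated collection of closed unbounded convex subsets of C. Then Gamma has only finitely many orbits in X, i.e., there exist X_1,...,X_m in X with X equal to the disjoint union of the Gamma-orbits of X_1,...,X_m. -/

import Mathlib

open Set Filter Topology

noncomputable section

/-- The vector space `ℝ^d`. -/
abbrev Vd (d : ℕ) := Fin d → ℝ

/-- Real projective space `P(ℝ^d)`. -/
abbrev Proj (d : ℕ) := Projectivization ℝ (Vd d)

instance (d : ℕ) : TopologicalSpace (Proj d) :=
  instTopologicalSpaceQuotient (s := projectivizationSetoid ℝ (Vd d))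

variable {d : ℕ}

/-- The affine chart associated to a nonzero linear functional `f`: a point `[v]` with
`f v ≠ 0` is sent to the representative `v / f v` in the affine hyperplane `{w : f w = 1}`. -/
def pchart (f : Vd d →ₗ[ℝ] ℝ) (x : Proj d) : Vd d := (f x.rep)⁻¹ • x.rep

/-- `C ⊆ P(ℝ^d)` is properly convex, realized in the affine chart determined by `f`:
its closure lies in the chart, and its image there is a bounded convex set. -/
structure IsPC (f : Vd d →ₗ[ℝ] ℝ) (C : Set (Proj d)) : Prop where
  chartOK : ∀ x ∈ closure C, f (Projectivization.rep x) ≠ 0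
  bounded : Bornology.IsBounded (pchart f '' C)
  convex : Convex ℝ (pchart f '' C)

/-- A properly convex domain: a nonempty open properly convex subset of `P(ℝ^d)`. -/
structure IsPCDomain (f : Vd d →ₗ[ℝ] ℝ) (Ω : Set (Proj d)) : Prop where
  pc : IsPC f Ω
  isOpen : IsOpen Ω
  nonempty : Ω.Nonempty

/-- The open projective segment `(x,y)`, computed in the affine chart of `f`. -/
def poseg (f : Vd d →ₗ[ℝ] ℝ) (x y : Proj d) : Set (Proj d) :=
  {z | ∃ w ∈ openSegment ℝ (pchart f x) (pchart f y), ∃ hw : w ≠ 0, z = Projectivization.mk ℝ w hw}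

/-- The closed projective segment `[x,y]`, computed in the affine chart of `f`. -/
def pcseg (f : Vd d →ₗ[ℝ] ℝ) (x y : Proj d) : Set (Proj d) :=
  {z | ∃ w ∈ segment ℝ (pchart f x) (pchart f y), ∃ hw : w ≠ 0, z = Projectivization.mk ℝ w hw}

/-- Parameters `t` for which `x + t(y - x)` lies in the closure of `K`. -/
def segSet (K : Set (Vd d)) (x y : Vd d) : Set ℝ := {t : ℝ | x + t • (y - x) ∈ closure K}

/-- Hilbert distance on a bounded convex set `K` in an affine chart, via the cross ratio:
with `s = sSup`, `r = sInf` of the parameter set (so the boundary points are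
`a = x + r(y-x)`, `b = x + s(y-x)`, ordered `a,x,y,b`), this is
`(1/2) log ( s(1-r) / ((s-1)(-r)) ) = (1/2) log (|x-b||y-a| / (|x-a||y-b|))`. -/
def affHilbertDist (K : Set (Vd d)) (x y : Vd d) : ℝ :=
  if x = y then 0 else
    (1/2) * Real.log ((sSup (segSet K x y) * (1 - sInf (segSet K x y))) /
      ((sSup (segSet K x y) - 1) * (- sInf (segSet K x y))))

/-- The Hilbert metric of a properly convex set `Ω`, in the chart of `f`. -/
def hdist (f : Vd d →ₗ[ℝ] ℝ) (Ω : Set (Proj d)) (x y : Proj d) : ℝ :=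
  affHilbertDist (pchart f '' Ω) (pchart f x) (pchart f y)

/-- The open face of a point `x` of the closure of an affine convex set `K`:
`x` together with all `y` in the closure such that some open segment contained in the closure
contains both `x` and `y`. -/
def affFace (K : Set (Vd d)) (x : Vd d) : Set (Vd d) :=
  insert x {y ∈ closure K | ∃ a b : Vd d, openSegment ℝ a b ⊆ closure K ∧
      x ∈ openSegment ℝ a b ∧ y ∈ openSegment ℝ a b}

/-- The open face `F_C(x)` of a point `x ∈ closure C`, for `C` properly convex in the chart of `f`. -/
def pface (f : Vd d →ₗ[ℝ] ℝ) (C : Set (Proj d)) (x : Proj d) : Set (Proj d) :=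
  insert x {y ∈ closure C | pchart f y ∈ affFace (pchart f '' C) (pchart f x)}

/-- `F_C(A) = ⋃_{x ∈ A} F_C(x)`. -/
def pfaceSet (f : Vd d →ₗ[ℝ] ℝ) (C : Set (Proj d)) (A : Set (Proj d)) : Set (Proj d) :=
  ⋃ x ∈ A, pface f C x

/-- The Hilbert metric of the open face `F_C(x)` (a properly convex set open in its span). -/
def pfaceDist (f : Vd d →ₗ[ℝ] ℝ) (C : Set (Proj d)) (x : Proj d) (p q : Proj d) : ℝ :=
  affHilbertDist (pchart f '' pface f C x) (pchart f p) (pchart f q)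

/-- The ideal boundary `∂ᵢ C = closure C ∩ ∂Ω` of a subset `C` of a domain `Ω`. -/
def idealBdry (Ω C : Set (Proj d)) : Set (Proj d) := closure C ∩ frontier Ω

/-- Linear automorphisms of `ℝ^d` (inducing projective transformations). -/
abbrev GLd (d : ℕ) := (Vd d) ≃ₗ[ℝ] (Vd d)

/-- The projective action of a linear automorphism. -/
def pact (g : GLd d) (x : Proj d) : Proj d := Projectivization.map g.toLinearMap g.injective x

/-- Orbit of a point under a set of linear automorphisms. -/
def orbitOf (S : Set (GLd d)) (p : Proj d) : Set (Proj d) := {q | ∃ γ ∈ S, q = pact γ p}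

/-- The limit set of a set of automorphisms of `Ω`: all boundary accumulation points of orbits. -/
def limitSetOf (Ω : Set (Proj d)) (S : Set (GLd d)) : Set (Proj d) :=
  frontier Ω ∩ ⋃ p ∈ Ω, closure (orbitOf S p)

/-- The limit set of a subgroup. -/
def limitSet (Ω : Set (Proj d)) (Γ : Subgroup (GLd d)) : Set (Proj d) :=
  limitSetOf Ω {γ : GLd d | γ ∈ Γ}

/-- Open `r`-neighborhood of `A` in `(Ω, hdist)`. -/
def hnbhd (f : Vd d →ₗ[ℝ] ℝ) (Ω A : Set (Proj d)) (r : ℝ) : Set (Proj d) :=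
  {x ∈ Ω | ∃ a ∈ A, hdist f Ω x a < r}

/-- Open metric ball in `(Ω, hdist)`. -/
def hball (f : Vd d →ₗ[ℝ] ℝ) (Ω : Set (Proj d)) (x₀ : Proj d) (r : ℝ) : Set (Proj d) :=
  {y ∈ Ω | hdist f Ω x₀ y < r}

/-- The Hilbert-metric diameter of `A` is at most `D`. -/
def DiamLE (f : Vd d →ₗ[ℝ] ℝ) (Ω A : Set (Proj d)) (D : ℝ) : Prop :=
  ∀ x ∈ A, ∀ y ∈ A, hdist f Ω x y ≤ D

/-- `X` is unbounded in `(Ω, hdist)`. -/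
def HUnbounded (f : Vd d →ₗ[ℝ] ℝ) (Ω X : Set (Proj d)) : Prop := ¬ ∃ D : ℝ, DiamLE f Ω X D

/-- A strongly isolated collection: intersections of `r`-neighborhoods of distinct
members have uniformly bounded diameter. -/
def StronglyIsolated (f : Vd d →ₗ[ℝ] ℝ) (Ω : Set (Proj d)) (𝒳 : Set (Set (Proj d))) : Prop :=
  ∀ r > (0:ℝ), ∃ D > (0:ℝ), ∀ X₁ ∈ 𝒳, ∀ X₂ ∈ 𝒳, X₁ ≠ X₂ →
    DiamLE f Ω (hnbhd f Ω X₁ r ∩ hnbhd f Ω X₂ r) D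

/-- A `Γ`-invariant collection of sets. -/
def GInvariant (Γ : Subgroup (GLd d)) (𝒳 : Set (Set (Proj d))) : Prop :=
  ∀ γ ∈ Γ, ∀ X ∈ 𝒳, pact γ '' X ∈ 𝒳

/-- A naive convex co-compact triple `(Ω, C, Γ)`. -/
structure IsNCC (f : Vd d →ₗ[ℝ] ℝ) (Ω C : Set (Proj d)) (Γ : Subgroup (GLd d)) : Prop where
  dom : IsPCDomain f Ω
  subset : C ⊆ Ω
  nonempty : C.Nonempty
  closedIn : closure C ∩ Ω ⊆ C
  convex : Convex ℝ (pchart f '' C)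
  invΩ : ∀ γ ∈ Γ, pact γ '' Ω = Ω
  invC : ∀ γ ∈ Γ, pact γ '' C = C
  discrete : ∀ K : Set (Proj d), K ⊆ Ω → IsCompact K →
      {γ : GLd d | γ ∈ Γ ∧ (pact γ '' K ∩ K).Nonempty}.Finite
  cocompact : ∃ K : Set (Proj d), K ⊆ C ∧ IsCompact K ∧ ∀ x ∈ C, ∃ γ ∈ Γ, pact γ x ∈ K

/-- `𝒳` is a collection of closed unbounded convex subsets of `C`. -/
structure IsCUC (f : Vd d →ₗ[ℝ] ℝ) (Ω C : Set (Proj d)) (𝒳 : Set (Set (Proj d))) : Prop where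
  sub : ∀ X ∈ 𝒳, X ⊆ C
  closedIn : ∀ X ∈ 𝒳, closure X ∩ Ω ⊆ X
  unbdd : ∀ X ∈ 𝒳, HUnbounded f Ω X
  convex : ∀ X ∈ 𝒳, Convex ℝ (pchart f '' X)

/-- The standard `k`-dimensional projective simplex, with vertices `e_0, …, e_k`. -/
def stdSimplexP (d k : ℕ) : Set (Proj d) :=
  {x : Proj d | ∃ (c : Vd d) (hc : c ≠ 0), (∀ i : Fin d, (i : ℕ) ≤ k → 0 < c i) ∧
      (∀ i : Fin d, k < (i : ℕ) → c i = 0) ∧ x = Projectivization.mk ℝ c hc}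

/-- `S` is a `k`-dimensional projective simplex. -/
def IsSimplex (k : ℕ) (S : Set (Proj d)) : Prop :=
  ∃ g : GLd d, pact g '' stdSimplexP d k = S

/-- `S` is properly embedded in `C` (the inclusion is a proper map). -/
def ProperlyEmbedded (C S : Set (Proj d)) : Prop := S ⊆ C ∧ closure S ∩ C ⊆ S

/-- `𝒳` coarsely contains the properly embedded simplices of `C` of dimension at least two. -/
def CoarselyContainsSimplices (f : Vd d →ₗ[ℝ] ℝ) (Ω C : Set (Proj d))
    (𝒳 : Set (Set (Proj d))) : Prop :=
  ∃ D > (0:ℝ), ∀ k : ℕ, 2 ≤ k → ∀ S : Set (Proj d), IsSimplex k S → ProperlyEmbedded C S →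
    ∃ X ∈ 𝒳, S ⊆ hnbhd f Ω X D

/-- A peripheral family of the naive convex co-compact triple `(Ω, C, Γ)`. -/
def IsPeripheralFamily (f : Vd d →ₗ[ℝ] ℝ) (Ω C : Set (Proj d)) (Γ : Subgroup (GLd d))
    (𝒳 : Set (Set (Proj d))) : Prop :=
  GInvariant Γ 𝒳 ∧ StronglyIsolated f Ω 𝒳 ∧ CoarselyContainsSimplices f Ω C 𝒳

/-- `Hausdorff distance between A and B (w.r.t. the distance function ρ) is at most M`. -/
def HausdorffLE {α : Type*} (ρ : α → α → ℝ) (A B : Set α) (M : ℝ) : Prop :=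
  (∀ a ∈ A, ∀ ε > (0:ℝ), ∃ b ∈ B, ρ a b < M + ε) ∧
  (∀ b ∈ B, ∀ ε > (0:ℝ), ∃ a ∈ A, ρ a b < M + ε)

/-- The closed convex hull of `A ⊆ closure Ω` taken inside `closure Ω`, in the chart of `f`. -/
def projConvHull (f : Vd d →ₗ[ℝ] ℝ) (Ω A : Set (Proj d)) : Set (Proj d) :=
  {z ∈ closure Ω | pchart f z ∈ closure (convexHull ℝ (pchart f '' A))}

/-- The convex core of `Γ`: the closed convex hull of the limit set, intersected with `Ω`. -/
def pcore (f : Vd d →ₗ[ℝ] ℝ) (Ω : Set (Proj d)) (Γ : Subgroup (GLd d)) : Set (Proj d) :=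
  projConvHull f Ω (limitSet Ω Γ) ∩ Ω

/-- `Γ` is a convex co-compact subgroup of `Aut(Ω)`. -/
structure IsCCSubgroup (f : Vd d →ₗ[ℝ] ℝ) (Ω : Set (Proj d)) (Γ : Subgroup (GLd d)) : Prop where
  dom : IsPCDomain f Ω
  invΩ : ∀ γ ∈ Γ, pact γ '' Ω = Ω
  discrete : ∀ K : Set (Proj d), K ⊆ Ω → IsCompact K →
      {γ : GLd d | γ ∈ Γ ∧ (pact γ '' K ∩ K).Nonempty}.Finite
  coreNonempty : (pcore f Ω Γ).Nonempty
  cocompact : ∃ K : Set (Proj d), K ⊆ pcore f Ω Γ ∧ IsCompact K ∧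
      ∀ x ∈ pcore f Ω Γ, ∃ γ ∈ Γ, pact γ x ∈ K

/-!
Let `K ⊆ C` be compact with `Γ • K ⊇ C`. Every member of `𝒳` has a translate meeting `K`, so it
suffices that only finitely many members meet `K`: representatives of their orbits do the job.

In an affine chart, call a point `ε`-deep if the `ε`-ball around it in the chart stays in the
closure of `Ω`. The Hilbert distance between `ε`-deep points is at most their Euclidean distance
divided by `ε`, and a point at Hilbert distance `≤ R` from a `ρ`-deep point is `e^{-2R} ρ`-deep.
Now `K` is `ρ`-deep for some `ρ`; let `D` bound the diameters of `N(X,1) ∩ N(Y,1)`, `X ≠ Y`, and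
put `ε = e^{-2D} ρ`. If infinitely many `X` meet `K`, at `κ_X`, sliding from `κ_X` to infinity
inside the convex unbounded `X` gives `ζ_X ∈ X` which is `ε/2`-deep but not `ε`-deep. By
compactness two distinct `X, Y` have `κ_X, κ_Y` and `ζ_X, ζ_Y` Euclidean-close, hence at Hilbert
distance `< 1`. Then `κ_X, ζ_X ∈ N(X,1) ∩ N(Y,1)`, so `d(κ_X, ζ_X) ≤ D` and `ζ_X` is `ε`-deep.
-/

theorem TotallyBounded.exists_ne_dist_lt {ι α : Type*} [Infinite ι] [PseudoMetricSpace α]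
    {s : Set α} (hs : TotallyBounded s) {u : ι → α} (hu : ∀ i, u i ∈ s) {δ : ℝ} (hδ : 0 < δ) :
    ∃ i j, i ≠ j ∧ dist (u i) (u j) < δ := by
  obtain ⟨t, ht, hst⟩ := Metric.totallyBounded_iff.1 hs (δ / 2) (half_pos hδ)
  have hnet : ∀ i, ∃ c : t, dist (u i) c < δ / 2 := fun i => by
    obtain ⟨c, hc, hic⟩ := mem_iUnion₂.1 (hst (hu i))
    exact ⟨⟨c, hc⟩, hic⟩
  choose c hc using hnet
  have := ht.to_subtype
  obtain ⟨i, j, hij, hcij⟩ := Finite.exists_ne_map_eq_of_infinite c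
  refine ⟨i, j, hij, ?_⟩
  calc dist (u i) (u j) ≤ dist (u i) (c i) + dist (u j) (c j) := by
        rw [hcij]; exact dist_triangle_right _ _ _
    _ < δ := by linarith [hc i, hc j]

theorem Set.Finite.exists_fin_transversal {α : Type*} (s : Setoid α) {T : Set α} (hT : T.Finite) :
    ∃ (m : ℕ) (xs : Fin m → α), (∀ i, xs i ∈ T) ∧ (∀ a ∈ T, ∃ i, s (xs i) a) ∧
      ∀ i j, s (xs i) (xs j) → i = j := by
  have := hT.to_subtype
  obtain ⟨m, ⟨e⟩⟩ := Finite.exists_equiv_fin (Quotient (s.comap ((↑) : T → α)))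
  refine ⟨m, fun i => (e.symm i).out, fun i => (e.symm i).out.2,
    fun a ha => ⟨e ⟦⟨a, ha⟩⟧, ?_⟩, fun i j hij => e.symm.injective ?_⟩
  · simp only [Equiv.symm_apply_apply]
    exact Quotient.mk_out (s := s.comap ((↑) : T → α)) ⟨a, ha⟩
  · rw [← Quotient.out_eq (e.symm i), ← Quotient.out_eq (e.symm j)]
    exact Quotient.sound hij

section DeepSet

variable {f : Vd d →ₗ[ℝ] ℝ} {W : Set (Vd d)}

def deepSet (f : Vd d →ₗ[ℝ] ℝ) (W : Set (Vd d)) (ε : ℝ) : Set (Vd d) :=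
  {w | f w = 1 ∧ ∀ y, f y = 1 → ‖y - w‖ ≤ ε → y ∈ closure W}

theorem deepSet_anti {ε ε' : ℝ} (h : ε' ≤ ε) : deepSet f W ε ⊆ deepSet f W ε' :=
  fun _ hw => ⟨hw.1, fun y hy hyw => hw.2 y hy (hyw.trans h)⟩

theorem mem_deepSet_sub_of_norm_sub_le {ε η : ℝ} {w w' : Vd d} (hw : w ∈ deepSet f W ε)
    (hw' : f w' = 1) (hww' : ‖w' - w‖ ≤ η) : w' ∈ deepSet f W (ε - η) :=
  ⟨hw', fun y hy hyw' => hw.2 y hy <| by linarith [norm_sub_le_norm_sub_add_norm_sub y w' w]⟩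

theorem isClosed_deepSet (ε : ℝ) : IsClosed (deepSet f W ε) := by
  have : deepSet f W ε =
      {w | f w = 1} ∩ ⋂ v ∈ {v | f v = 0 ∧ ‖v‖ ≤ ε}, (· + v) ⁻¹' closure W := by
    ext w
    simp only [deepSet, mem_ofPred_eq, mem_inter_iff, mem_iInter, mem_preimage]
    refine and_congr_right fun hw => ⟨fun h v hv => h _ (by simp [hw, hv.1]) (by simpa using hv.2),
      fun h y hy hyw => by simpa using h (y - w) ⟨by simp [hw, hy], hyw⟩⟩
  rw [this]
  exact (isClosed_eq f.continuous_of_finiteDimensional continuous_const).inter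
    (isClosed_biInter fun v _ => isClosed_closure.preimage (continuous_add_const v))

theorem exists_mem_segment_mem_deepSet_diff {ε η : ℝ} (hη : 0 < η) {p q : Vd d}
    (hp : p ∈ deepSet f W ε) (hq : f q = 1) (hqε : q ∉ deepSet f W ε) :
    ∃ z ∈ segment ℝ p q, z ∈ deepSet f W (ε - η) \ deepSet f W ε := by
  set σ : ℝ → Vd d := ⇑(AffineMap.lineMap (k := ℝ) p q)
  set S := Icc (0 : ℝ) 1 ∩ σ ⁻¹' deepSet f W ε
  have hSbdd : BddAbove S := bddAbove_Icc.mono inter_subset_left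
  have hsS : sSup S ∈ S :=
    (isClosed_Icc.inter ((isClosed_deepSet ε).preimage AffineMap.lineMap_continuous)).csSup_mem
      ⟨0, left_mem_Icc.2 zero_le_one, by simpa [σ] using hp⟩ hSbdd
  set s := sSup S
  have hs1 : s < 1 := hsS.1.2.lt_of_ne fun h => hqε (by simpa [σ, h] using hsS.2)
  have hpq : 0 < dist p q := dist_pos.2 fun h => hqε (h ▸ hp)
  -- `σ t` lies just beyond the last `ε`-deep point `σ s` of the segment
  set t := min 1 (s + η / dist p q)
  have hst : s < t := lt_min hs1 (lt_add_of_pos_right _ (div_pos hη hpq))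
  have ht : t ∈ Icc (0 : ℝ) 1 := ⟨hsS.1.1.trans hst.le, min_le_left _ _⟩
  refine ⟨σ t, segment_eq_image_lineMap ℝ p q ▸ mem_image_of_mem σ ht, ?_,
    fun h => hst.not_ge (le_csSup hSbdd ⟨ht, h⟩)⟩
  refine mem_deepSet_sub_of_norm_sub_le hsS.2
    (by simp [σ, AffineMap.lineMap_apply_module, hp.1, hq]) ?_
  rw [← dist_eq_norm, dist_lineMap_lineMap, Real.dist_eq, abs_of_pos (sub_pos.2 hst)]
  calc (t - s) * dist p q ≤ η / dist p q * dist p q := by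
        gcongr; linarith [min_le_right 1 (s + η / dist p q)]
    _ = η := div_mul_cancel₀ _ hpq.ne'

theorem lineMap_mem_deepSet (hWc : Convex ℝ (closure W)) {ρ θ : ℝ} {p b : Vd d}
    (hp : p ∈ deepSet f W ρ) (hb : b ∈ closure W) (hb1 : f b = 1) (hθ0 : 0 ≤ θ) (hθ1 : θ < 1) :
    AffineMap.lineMap p b θ ∈ deepSet f W ((1 - θ) * ρ) := by
  rw [AffineMap.lineMap_apply_module]
  have hθ : 0 < 1 - θ := sub_pos.2 hθ1
  refine ⟨by simp [hp.1, hb1], fun y hy hyz => ?_⟩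
  set p' := p + (1 - θ)⁻¹ • (y - ((1 - θ) • p + θ • b))
  have hp' : p' ∈ closure W := by
    refine hp.2 p' (by simp [p', hp.1, hb1, hy]) ?_
    rw [add_sub_cancel_left, norm_smul, Real.norm_eq_abs, abs_inv, abs_of_pos hθ,
      inv_mul_le_iff₀ hθ]
    exact hyz
  have hy' : y = (1 - θ) • p' + θ • b := by
    simp only [p', smul_add, smul_smul, mul_inv_cancel₀ hθ.ne', one_smul]
    abel
  rw [hy']
  exact hWc hp' hb hθ.le hθ0 (by ring)

end DeepSet

section HilbertDistance

variable {f : Vd d →ₗ[ℝ] ℝ} {W : Set (Vd d)} {p q : Vd d}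

theorem isClosed_segSet (W : Set (Vd d)) (p q : Vd d) : IsClosed (segSet W p q) :=
  isClosed_closure.preimage (continuous_const.add (continuous_id.smul continuous_const))

theorem isBounded_segSet (hW : Bornology.IsBounded W) (hpq : p ≠ q) :
    Bornology.IsBounded (segSet W p q) := by
  have hqp : 0 < ‖q - p‖ := norm_pos_iff.2 (sub_ne_zero.2 hpq.symm)
  have hσ : AntilipschitzWith ‖q - p‖₊⁻¹ fun t : ℝ => p + t • (q - p) := by
    refine AntilipschitzWith.of_le_mul_dist fun s t => ?_
    rw [dist_add_left, dist_eq_norm (s • _), ← sub_smul, norm_smul, NNReal.coe_inv, coe_nnnorm,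
      mul_comm ‖s - t‖, inv_mul_cancel_left₀ hqp.ne', dist_eq_norm]
  exact hσ.isBounded_preimage hW.closure

theorem mem_segSet_of_mem_deepSet_left {ε t : ℝ} (hp : p ∈ deepSet f W ε) (hq : f q = 1)
    (ht : |t| * ‖q - p‖ ≤ ε) : t ∈ segSet W p q :=
  hp.2 _ (by simp [hp.1, hq]) (by simpa [norm_smul] using ht)

theorem mem_segSet_of_mem_deepSet_right {ε t : ℝ} (hp : f p = 1) (hq : q ∈ deepSet f W ε)
    (ht : |t - 1| * ‖q - p‖ ≤ ε) : t ∈ segSet W p q := by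
  refine hq.2 _ (by simp [hp, hq.1]) ?_
  rwa [show p + t • (q - p) - q = (t - 1) • (q - p) by module, norm_smul, Real.norm_eq_abs]

theorem one_add_div_le_sSup_segSet (hW : Bornology.IsBounded W) (hpq : p ≠ q) {ε : ℝ}
    (hε : 0 ≤ ε) (hp : f p = 1) (hq : q ∈ deepSet f W ε) :
    1 + ε / ‖q - p‖ ≤ sSup (segSet W p q) := by
  refine le_csSup (isBounded_segSet hW hpq).bddAbove (mem_segSet_of_mem_deepSet_right hp hq ?_)
  rw [add_sub_cancel_left, abs_of_nonneg (by positivity)]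
  exact (div_mul_cancel₀ _ (norm_pos_iff.2 (sub_ne_zero.2 hpq.symm)).ne').le

theorem sInf_segSet_le_neg_div (hW : Bornology.IsBounded W) (hpq : p ≠ q) {ε : ℝ}
    (hε : 0 ≤ ε) (hp : p ∈ deepSet f W ε) (hq : f q = 1) :
    sInf (segSet W p q) ≤ -(ε / ‖q - p‖) := by
  refine csInf_le (isBounded_segSet hW hpq).bddBelow (mem_segSet_of_mem_deepSet_left hp hq ?_)
  rw [abs_neg, abs_of_nonneg (by positivity)]
  exact (div_mul_cancel₀ _ (norm_pos_iff.2 (sub_ne_zero.2 hpq.symm)).ne').le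

theorem affHilbertDist_eq_of_lt (hpq : p ≠ q) (hs : 1 < sSup (segSet W p q))
    (hr : sInf (segSet W p q) < 0) :
    affHilbertDist W p q = (Real.log (1 + 1 / (sSup (segSet W p q) - 1)) +
      Real.log (1 + 1 / -sInf (segSet W p q))) / 2 := by
  have hs' : 0 < sSup (segSet W p q) - 1 := by linarith
  have hr' : 0 < -sInf (segSet W p q) := by linarith
  rw [affHilbertDist, if_neg hpq, ← Real.log_mul (by positivity) (by positivity)]
  have : sSup (segSet W p q) * (1 - sInf (segSet W p q)) /
      ((sSup (segSet W p q) - 1) * -sInf (segSet W p q)) =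
      (1 + 1 / (sSup (segSet W p q) - 1)) * (1 + 1 / -sInf (segSet W p q)) := by
    field_simp [hs'.ne', hr.ne]
    ring
  rw [this]
  ring

theorem affHilbertDist_le_of_mem_deepSet (hW : Bornology.IsBounded W) {ε : ℝ} (hε : 0 < ε)
    (hp : p ∈ deepSet f W ε) (hq : q ∈ deepSet f W ε) :
    affHilbertDist W p q ≤ ‖q - p‖ / ε := by
  by_cases hpq : p = q
  · simp only [affHilbertDist, if_pos hpq]
    positivity
  have hεq : 0 < ε / ‖q - p‖ := div_pos hε (norm_pos_iff.2 (sub_ne_zero.2 (Ne.symm hpq)))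
  have hs := one_add_div_le_sSup_segSet hW hpq hε.le hp.1 hq
  have hr := sInf_segSet_le_neg_div hW hpq hε.le hp hq.1
  have key : ∀ a, ε / ‖q - p‖ ≤ a → Real.log (1 + 1 / a) ≤ ‖q - p‖ / ε := fun a ha => by
    have ha0 : 0 < a := hεq.trans_le ha
    calc Real.log (1 + 1 / a) ≤ 1 / a := by
          linarith [Real.log_le_sub_one_of_pos (by positivity : 0 < 1 + 1 / a)]
      _ ≤ 1 / (ε / ‖q - p‖) := one_div_le_one_div_of_le hεq ha
      _ = ‖q - p‖ / ε := one_div_div _ _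
  rw [affHilbertDist_eq_of_lt hpq (by linarith) (by linarith)]
  linarith [key _ (by linarith : ε / ‖q - p‖ ≤ sSup (segSet W p q) - 1),
    key _ (by linarith : ε / ‖q - p‖ ≤ -sInf (segSet W p q))]

theorem mem_deepSet_of_affHilbertDist_le (hW : Bornology.IsBounded W)
    (hWc : Convex ℝ (closure W)) {ρ η R : ℝ} (hρ : 0 < ρ) (hη : 0 < η)
    (hp : p ∈ deepSet f W ρ) (hq : q ∈ deepSet f W η) (hpq : affHilbertDist W p q ≤ R) :
    q ∈ deepSet f W (Real.exp (-2 * R) * ρ) := by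
  by_cases hpq' : p = q
  · subst hpq'
    have hR : 0 ≤ R := by simpa [affHilbertDist] using hpq
    exact deepSet_anti (mul_le_of_le_one_left hρ.le (Real.exp_le_one_iff.2 (by linarith))) hp
  have hqp : 0 < ‖q - p‖ := norm_pos_iff.2 (sub_ne_zero.2 (Ne.symm hpq'))
  set s := sSup (segSet W p q)
  set r := sInf (segSet W p q)
  have hs : 1 < s := by
    linarith [one_add_div_le_sSup_segSet hW hpq' hη.le hp.1 hq, div_pos hη hqp]
  have hr : r < 0 := by linarith [sInf_segSet_le_neg_div hW hpq' hρ.le hp hq.1, div_pos hρ hqp]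
  have hsS : s ∈ segSet W p q :=
    (isClosed_segSet W p q).csSup_mem
      ⟨0, mem_segSet_of_mem_deepSet_left hp hq.1 (by simpa using hρ.le)⟩
      (isBounded_segSet hW hpq').bddAbove
  have hlog : Real.log (1 + 1 / (s - 1)) ≤ 2 * R := by
    rw [affHilbertDist_eq_of_lt hpq' hs hr] at hpq
    have : 0 < 1 / -r := one_div_pos.2 (neg_pos.2 hr)
    linarith [Real.log_nonneg (by linarith : (1 : ℝ) ≤ 1 + 1 / -r)]
  have hs' : 0 < 1 + 1 / (s - 1) := by have := one_div_pos.2 (sub_pos.2 hs); linarith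
  have hexp : Real.exp (-2 * R) ≤ 1 - 1 / s := by
    rw [show -2 * R = -(2 * R) by ring, Real.exp_neg]
    calc (Real.exp (2 * R))⁻¹ ≤ (1 + 1 / (s - 1))⁻¹ :=
          inv_anti₀ hs' ((Real.log_le_iff_le_exp hs').1 hlog)
      _ = 1 - 1 / s := by field_simp [(sub_pos.2 hs).ne', (by linarith : s ≠ 0)]; ring
  -- `q` divides `[p, p + s • (q - p)]`, a chord of `closure W`, in the ratio `1 / s`
  have hq' : q = AffineMap.lineMap p (p + s • (q - p)) (1 / s) := by
    rw [AffineMap.lineMap_apply_module', add_sub_cancel_left, smul_smul,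
      one_div_mul_cancel (by linarith), one_smul, sub_add_cancel]
  rw [hq']
  refine deepSet_anti (by gcongr) (lineMap_mem_deepSet hWc hp hsS ?_ (by positivity) ?_)
  · simp [hp.1, hq.1]
  · rw [div_lt_one (by linarith)]; exact hs

end HilbertDistance

section Chart

variable {f : Vd d →ₗ[ℝ] ℝ} {Ω : Set (Proj d)}

theorem exists_rep_mk {w : Vd d} (hw : w ≠ 0) :
    ∃ a : ℝˣ, (Projectivization.mk ℝ w hw).rep = a • w := by
  obtain ⟨a, ha⟩ := (Projectivization.mk_eq_mk_iff ℝ _ _ (Projectivization.rep_nonzero _) hw).1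
    (Projectivization.mk_rep (Projectivization.mk ℝ w hw))
  exact ⟨a, ha.symm⟩

theorem pchart_mk {w : Vd d} (hw : w ≠ 0) :
    pchart f (Projectivization.mk ℝ w hw) = (f w)⁻¹ • w := by
  obtain ⟨a, ha⟩ := exists_rep_mk hw
  rw [pchart, ha, Units.smul_def, map_smul, smul_eq_mul, smul_smul, mul_inv, mul_right_comm,
    inv_mul_cancel₀ a.ne_zero, one_mul]

theorem apply_rep_mk_ne_zero_iff {w : Vd d} (hw : w ≠ 0) :
    f (Projectivization.mk ℝ w hw).rep ≠ 0 ↔ f w ≠ 0 := by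
  obtain ⟨a, ha⟩ := exists_rep_mk hw
  rw [ha, Units.smul_def, map_smul, smul_eq_mul, mul_ne_zero_iff, and_iff_right a.ne_zero]

theorem apply_pchart_eq_one {x : Proj d} (hx : f x.rep ≠ 0) : f (pchart f x) = 1 := by
  simp [pchart, hx]

theorem pchart_ne_zero {x : Proj d} (hx : f x.rep ≠ 0) : pchart f x ≠ 0 :=
  fun h => by simpa [h] using apply_pchart_eq_one hx

theorem mk_pchart {x : Proj d} (hx : f x.rep ≠ 0) :
    Projectivization.mk ℝ (pchart f x) (pchart_ne_zero hx) = x := by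
  conv_rhs => rw [← Projectivization.mk_rep x]
  exact (Projectivization.mk_eq_mk_iff ℝ _ _ _ _).2
    ⟨Units.mk0 (f x.rep)⁻¹ (inv_ne_zero hx), rfl⟩

theorem isQuotientMap_projectivization_mk : IsQuotientMap fun v : {v : Vd d // v ≠ 0} =>
    Projectivization.mk ℝ v.1 v.2 :=
  isQuotientMap_quot_mk

theorem continuousOn_pchart : ContinuousOn (pchart f) {x : Proj d | f x.rep ≠ 0} := by
  have hq := isQuotientMap_projectivization_mk (d := d)
  have hpre : (fun v : {v : Vd d // v ≠ 0} => Projectivization.mk ℝ v.1 v.2) ⁻¹'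
      {x | f x.rep ≠ 0} = {v | f v.1 ≠ 0} := by
    ext v
    exact apply_rep_mk_ne_zero_iff v.2
  have hopen : IsOpen {v : {v : Vd d // v ≠ 0} | f v.1 ≠ 0} :=
    isOpen_ne_fun (f.continuous_of_finiteDimensional.comp continuous_subtype_val) continuous_const
  have hU : IsOpen {x : Proj d | f x.rep ≠ 0} := hq.isOpen_preimage.1 (hpre ▸ hopen)
  rw [hq.continuousOn_isOpen_iff hU, hpre]
  have hcomp : pchart f ∘ (fun v : {v : Vd d // v ≠ 0} => Projectivization.mk ℝ v.1 v.2) =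
      fun v => (f v.1)⁻¹ • v.1 := funext fun v => pchart_mk v.2
  rw [hcomp]
  have hfv : Continuous fun v : {v : Vd d // v ≠ 0} => f v.1 :=
    f.continuous_of_finiteDimensional.comp continuous_subtype_val
  exact (hfv.continuousOn.inv₀ fun _ hv => hv).smul continuous_subtype_val.continuousOn

def affineCone (Ω : Set (Proj d)) : Set (Vd d) :=
  {w | ∃ hw : w ≠ 0, Projectivization.mk ℝ w hw ∈ Ω}

theorem isOpen_affineCone (hΩ : IsOpen Ω) : IsOpen (affineCone Ω) := by
  have : affineCone Ω = Subtype.val ''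
      ((fun v : {v : Vd d // v ≠ 0} => Projectivization.mk ℝ v.1 v.2) ⁻¹' Ω) := by
    ext w
    exact ⟨fun ⟨hw, hwΩ⟩ => ⟨⟨w, hw⟩, hwΩ, rfl⟩, fun ⟨v, hv, hvw⟩ => hvw ▸ ⟨v.2, hv⟩⟩
  rw [this]
  exact isOpen_ne.isOpenMap_subtype_val _ (hΩ.preimage isQuotientMap_projectivization_mk.continuous)

theorem mem_pchart_image_iff (hΩ : ∀ x ∈ Ω, f x.rep ≠ 0) {w : Vd d} :
    w ∈ pchart f '' Ω ↔ f w = 1 ∧ w ∈ affineCone Ω := by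
  constructor
  · rintro ⟨x, hx, rfl⟩
    exact ⟨apply_pchart_eq_one (hΩ x hx), pchart_ne_zero (hΩ x hx),
      (mk_pchart (hΩ x hx)).symm ▸ hx⟩
  · rintro ⟨hw1, hw, hwΩ⟩
    exact ⟨_, hwΩ, by rw [pchart_mk, hw1, inv_one, one_smul]⟩

theorem IsCompact.exists_pchart_image_subset_deepSet (hΩo : IsOpen Ω)
    (hΩ : ∀ x ∈ Ω, f x.rep ≠ 0) {K : Set (Proj d)} (hK : IsCompact K) (hKΩ : K ⊆ Ω) :
    ∃ ρ > 0, pchart f '' K ⊆ deepSet f (pchart f '' Ω) ρ := by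
  have hKc : IsCompact (pchart f '' K) :=
    hK.image_of_continuousOn (continuousOn_pchart.mono fun x hx => hΩ x (hKΩ hx))
  obtain ⟨ρ, hρ, hsub⟩ := hKc.exists_cthickening_subset_open (isOpen_affineCone hΩo)
    (image_subset_iff.2 fun x hx => ((mem_pchart_image_iff hΩ).1 ⟨x, hKΩ hx, rfl⟩).2)
  refine ⟨ρ, hρ, ?_⟩
  rintro _ ⟨x, hx, rfl⟩
  refine ⟨apply_pchart_eq_one (hΩ x (hKΩ hx)), fun y hy hyx =>
    subset_closure ((mem_pchart_image_iff hΩ).2 ⟨hy, hsub ?_⟩)⟩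
  exact Metric.mem_cthickening_of_dist_le y _ ρ _ (mem_image_of_mem _ hx)
    (by rwa [dist_eq_norm])

end Chart

section HilbertMetric

variable {f : Vd d →ₗ[ℝ] ℝ} {Ω : Set (Proj d)}

theorem mem_hnbhd_inter_hnbhd (hΩ : Bornology.IsBounded (pchart f '' Ω)) {ε r : ℝ}
    (hε : 0 < ε) (hr : 0 < r) {X Y : Set (Proj d)} {x y : Proj d} (hxΩ : x ∈ Ω) (hxX : x ∈ X)
    (hyY : y ∈ Y) (hx : pchart f x ∈ deepSet f (pchart f '' Ω) ε)
    (hy : pchart f y ∈ deepSet f (pchart f '' Ω) ε) (hxy : ‖pchart f x - pchart f y‖ < ε * r) :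
    x ∈ hnbhd f Ω X r ∩ hnbhd f Ω Y r := by
  refine ⟨⟨hxΩ, x, hxX, by simpa [hdist, affHilbertDist] using hr⟩, hxΩ, y, hyY,
    (affHilbertDist_le_of_mem_deepSet hΩ hε hx hy).trans_lt ?_⟩
  rwa [norm_sub_rev, div_lt_iff₀' hε]

theorem HUnbounded.nonempty {X : Set (Proj d)} (hX : HUnbounded f Ω X) : X.Nonempty :=
  nonempty_iff_ne_empty.2 fun h => hX ⟨0, by simp [DiamLE, h]⟩

theorem HUnbounded.exists_pchart_not_mem_deepSet {X : Set (Proj d)} (hX : HUnbounded f Ω X)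
    (hΩ : Bornology.IsBounded (pchart f '' Ω)) {ε : ℝ} (hε : 0 < ε) :
    ∃ y ∈ X, pchart f y ∉ deepSet f (pchart f '' Ω) ε := by
  by_contra! hdeep
  refine hX ⟨Metric.diam (closure (pchart f '' Ω)) / ε, fun x hx y hy => ?_⟩
  have hclosure : ∀ z ∈ X, pchart f z ∈ closure (pchart f '' Ω) := fun z hz =>
    (hdeep z hz).2 _ (hdeep z hz).1 (by simpa using hε.le)
  calc hdist f Ω x y ≤ ‖pchart f y - pchart f x‖ / ε :=
        affHilbertDist_le_of_mem_deepSet hΩ hε (hdeep x hx) (hdeep y hy)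
    _ ≤ Metric.diam (closure (pchart f '' Ω)) / ε := by
        rw [← dist_eq_norm]
        gcongr
        exact Metric.dist_le_diam_of_mem hΩ.closure (hclosure y hy) (hclosure x hx)

theorem HUnbounded.exists_pchart_mem_deepSet_diff {X : Set (Proj d)} (hX : HUnbounded f Ω X)
    (hΩ : Bornology.IsBounded (pchart f '' Ω)) (hΩf : ∀ x ∈ Ω, f x.rep ≠ 0) (hXΩ : X ⊆ Ω)
    (hXc : Convex ℝ (pchart f '' X)) {ε : ℝ} (hε : 0 < ε) {κ : Proj d} (hκX : κ ∈ X)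
    (hκ : pchart f κ ∈ deepSet f (pchart f '' Ω) ε) :
    ∃ ζ ∈ X, pchart f ζ ∈ deepSet f (pchart f '' Ω) (ε / 2) \ deepSet f (pchart f '' Ω) ε := by
  obtain ⟨y, hyX, hy⟩ := hX.exists_pchart_not_mem_deepSet hΩ hε
  obtain ⟨z, hz, hzd⟩ := exists_mem_segment_mem_deepSet_diff (half_pos hε) hκ
    (apply_pchart_eq_one (hΩf y (hXΩ hyX))) hy
  obtain ⟨ζ, hζX, rfl⟩ := hXc.segment_subset (mem_image_of_mem _ hκX) (mem_image_of_mem _ hyX) hz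
  exact ⟨ζ, hζX, sub_half ε ▸ hzd⟩

end HilbertMetric

theorem StronglyIsolated.finite_setOf_inter_nonempty {f : Vd d →ₗ[ℝ] ℝ} {Ω : Set (Proj d)}
    (hΩ : IsPCDomain f Ω) {𝒳 : Set (Set (Proj d))} (hiso : StronglyIsolated f Ω 𝒳)
    (hXΩ : ∀ X ∈ 𝒳, X ⊆ Ω) (hunb : ∀ X ∈ 𝒳, HUnbounded f Ω X)
    (hconv : ∀ X ∈ 𝒳, Convex ℝ (pchart f '' X)) {K : Set (Proj d)} (hK : IsCompact K)
    (hKΩ : K ⊆ Ω) : {X ∈ 𝒳 | (X ∩ K).Nonempty}.Finite := by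
  set W := pchart f '' Ω
  set T := {X ∈ 𝒳 | (X ∩ K).Nonempty}
  have hΩf : ∀ x ∈ Ω, f x.rep ≠ 0 := fun x hx => hΩ.pc.chartOK x (subset_closure hx)
  obtain ⟨ρ, hρ, hKρ⟩ := hK.exists_pchart_image_subset_deepSet hΩ.isOpen hΩf hKΩ
  obtain ⟨D, hD, hdiam⟩ := hiso 1 one_pos
  set ε := Real.exp (-2 * D) * ρ
  have hε : 0 < ε := by positivity
  have hKε : pchart f '' K ⊆ deepSet f W ε := hKρ.trans <| deepSet_anti <|
    mul_le_of_le_one_left hρ.le (Real.exp_le_one_iff.2 (by linarith))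
  have hKε' : pchart f '' K ⊆ deepSet f W (ε / 2) := hKε.trans (deepSet_anti (half_le_self hε.le))
  by_contra hinf
  have : Infinite T := infinite_coe_iff.2 hinf
  have hTΩ : ∀ X : T, (X : Set (Proj d)) ⊆ Ω := fun X => hXΩ X X.2.1
  have hpts : ∀ X : T, ∃ κ ∈ (X : Set (Proj d)) ∩ K,
      ∃ ζ ∈ (X : Set (Proj d)), pchart f ζ ∈ deepSet f W (ε / 2) \ deepSet f W ε := fun X => by
    obtain ⟨κ, hκ⟩ := X.2.2
    exact ⟨κ, hκ, (hunb X X.2.1).exists_pchart_mem_deepSet_diff hΩ.pc.bounded hΩf (hTΩ X)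
      (hconv X X.2.1) hε hκ.1 (hKε (mem_image_of_mem _ hκ.2))⟩
  choose κ hκ ζ hζX hζ using hpts
  have hW : ∀ X, (pchart f (κ X), pchart f (ζ X)) ∈ W ×ˢ W := fun X =>
    ⟨mem_image_of_mem _ (hTΩ X (hκ X).1), mem_image_of_mem _ (hTΩ X (hζX X))⟩
  obtain ⟨X, Y, hXY, hclose⟩ := (hΩ.pc.bounded.prod hΩ.pc.bounded).isCompact_closure
    |>.totallyBounded.subset subset_closure |>.exists_ne_dist_lt hW (half_pos hε)
  rw [Prod.dist_eq, max_lt_iff, dist_eq_norm, dist_eq_norm, ← mul_one (ε / 2)] at hclose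
  have hκζ := hdiam X X.2.1 Y Y.2.1 (fun h => hXY (Subtype.ext h)) (κ X)
    (mem_hnbhd_inter_hnbhd hΩ.pc.bounded (half_pos hε) one_pos (hTΩ X (hκ X).1) (hκ X).1 (hκ Y).1
      (hKε' (mem_image_of_mem _ (hκ X).2)) (hKε' (mem_image_of_mem _ (hκ Y).2)) hclose.1) (ζ X)
    (mem_hnbhd_inter_hnbhd hΩ.pc.bounded (half_pos hε) one_pos (hTΩ X (hζX X)) (hζX X) (hζX Y)
      (hζ X).1 (hζ Y).1 hclose.2)
  exact (hζ X).2 (mem_deepSet_of_affHilbertDist_le hΩ.pc.bounded hΩ.pc.convex.closure hρ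
    (half_pos hε) (hKρ (mem_image_of_mem _ (hκ X).2)) (hζ X).1 hκζ)

theorem pact_mk (g : GLd d) {v : Vd d} (hv : v ≠ 0) :
    pact g (Projectivization.mk ℝ v hv) = Projectivization.mk ℝ (g v) (g.map_ne_zero_iff.2 hv) :=
  Projectivization.map_mk _ _ _ _

theorem pact_one (x : Proj d) : pact 1 x = x := by
  induction x using Projectivization.ind with
  | h v hv => rw [pact_mk]; rfl

theorem pact_mul (g h : GLd d) (x : Proj d) : pact (g * h) x = pact g (pact h x) := by
  induction x using Projectivization.ind with
  | h v hv => rw [pact_mk, pact_mk, pact_mk]; rfl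

theorem image_pact_one (X : Set (Proj d)) : pact 1 '' X = X := by
  simp [pact_one]

theorem image_pact_mul (g h : GLd d) (X : Set (Proj d)) :
    pact (g * h) '' X = pact g '' (pact h '' X) := by
  simp [image_image, pact_mul]

def orbitSetoid (Γ : Subgroup (GLd d)) : Setoid (Set (Proj d)) where
  r X Y := ∃ γ ∈ Γ, pact γ '' X = Y
  iseqv :=
    { refl := fun X => ⟨1, Γ.one_mem, image_pact_one X⟩
      symm := fun ⟨γ, hγ, hXY⟩ => ⟨γ⁻¹, Γ.inv_mem hγ, by
        rw [← hXY, ← image_pact_mul, inv_mul_cancel, image_pact_one]⟩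
      trans := fun ⟨γ, hγ, hXY⟩ ⟨γ', hγ', hYZ⟩ => ⟨γ' * γ, Γ.mul_mem hγ' hγ, by
        rw [image_pact_mul, hXY, hYZ]⟩ }

/-- Γ has finitely many orbits in a Γ-invariant strongly isolated collection
`𝒳` of closed unbounded convex subsets of `C`: 𝒳 is the disjoint union of the orbits of
finitely many of its members. -/
theorem stmt_6 {d : ℕ} (f : Vd d →ₗ[ℝ] ℝ) (Ω C : Set (Proj d)) (Γ : Subgroup (GLd d))
    (h : IsNCC f Ω C Γ) (𝒳 : Set (Set (Proj d))) (h𝒳 : IsCUC f Ω C 𝒳)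
    (hinv : GInvariant Γ 𝒳) (hiso : StronglyIsolated f Ω 𝒳) :
    ∃ (m : ℕ) (Xs : Fin m → Set (Proj d)),
      (∀ i, Xs i ∈ 𝒳) ∧
      (∀ X ∈ 𝒳, ∃ i, ∃ γ ∈ Γ, pact γ '' Xs i = X) ∧
      (∀ i j, i ≠ j → ∀ γ ∈ Γ, pact γ '' Xs i ≠ Xs j) := by
  obtain ⟨K, hKC, hK, hKfund⟩ := h.cocompact
  have hT := hiso.finite_setOf_inter_nonempty h.dom (fun X hX => (h𝒳.sub X hX).trans h.subset)
    h𝒳.unbdd h𝒳.convex hK (hKC.trans h.subset)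
  obtain ⟨m, Xs, hXsT, hcov, hXs⟩ := hT.exists_fin_transversal (orbitSetoid Γ)
  refine ⟨m, Xs, fun i => (hXsT i).1, fun X hX => ?_,
    fun i j hij γ hγ hγij => hij (hXs i j ⟨γ, hγ, hγij⟩)⟩
  obtain ⟨x, hx⟩ := (h𝒳.unbdd X hX).nonempty
  obtain ⟨γ, hγ, hγx⟩ := hKfund x (h𝒳.sub X hX hx)
  obtain ⟨i, hi⟩ := hcov _ ⟨hinv γ hγ X hX, pact γ x, mem_image_of_mem _ hx, hγx⟩
  exact ⟨i, (orbitSetoid Γ).iseqv.trans hi ((orbitSetoid Γ).iseqv.symm ⟨γ, hγ, rfl⟩)⟩
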